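/- Let d ≥ 1, let G ∈ M_d(ℂ) be a Hermitian unitary matrix, let O ∈ M_d(ℂ) be Hermitian, and let ρ ∈ M_d(ℂ) be a density matrix. With W_±(θ) = exp(−i(θ ± π/4)G) and O₂ = (O − G·O·G)/2, one has (1/(2π)) ∫₀^{2π} ( Tr[O·W₊(θ)·ρ·W₊(θ)†] − Tr[O·W₋(θ)·ρ·W₋(θ)†] )² dθ = 2·(Tr[O₂ρ])² + 2·(Tr[iO₂Gρ])². -/

import Mathlib

open Matrix MeasureTheory
open scoped ComplexOrder

noncomputable section

/-- The rotation `W(θ) = exp(−iθG)` generated by a matrix `G`. -/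
def Wrot {d : ℕ} (G : Matrix (Fin d) (Fin d) ℂ) (θ : ℝ) : Matrix (Fin d) (Fin d) ℂ :=
  NormedSpace.exp ((-(Complex.I * (θ : ℂ))) • G)

/-- The commuting part `O₁ = (O + G·O·G)/2` of `O` with respect to `G`. -/
def Opart1 {d : ℕ} (G O : Matrix (Fin d) (Fin d) ℂ) : Matrix (Fin d) (Fin d) ℂ :=
  (2⁻¹ : ℂ) • (O + G * O * G)

/-- The anticommuting part `O₂ = (O − G·O·G)/2` of `O` with respect to `G`. -/
def Opart2 {d : ℕ} (G O : Matrix (Fin d) (Fin d) ℂ) : Matrix (Fin d) (Fin d) ℂ :=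
  (2⁻¹ : ℂ) • (O - G * O * G)

/-!
Since `G² = 1`, `W(θ) = cos θ - i sin θ · G`. Split `O = O₁ + O₂` with `O₁` commuting and `O₂`
anticommuting with `G`; conjugation by `W(θ)` fixes `O₁` and sends `O₂` to `O₂ W(2θ)`, so
`Tr[O W ρ W†] = Tr[O₁ρ] + cos 2θ · Tr[O₂ρ] - sin 2θ · Tr[iO₂Gρ]`. The shifts `±π/4` turn the
difference into `-2 (Tr[O₂ρ] sin 2θ + Tr[iO₂Gρ] cos 2θ)`, and over a period `sin²` and `cos²`
average to `1/2` while `sin · cos` averages to `0`.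
-/

open Real in
theorem integral_sq_mul_sin_two_mul_add_mul_cos_two_mul (b c : ℝ) :
    ∫ θ in (0 : ℝ)..(2 * π), (b * sin (2 * θ) + c * cos (2 * θ)) ^ 2 = π * (b ^ 2 + c ^ 2) := by
  have hexpand : ∀ u : ℝ, (b * sin u + c * cos u) ^ 2
      = b ^ 2 * sin u ^ 2 + ((2 * b * c) * (sin u * cos u) + c ^ 2 * cos u ^ 2) := fun u => by ring
  have hint : ∀ f : ℝ → ℝ, Continuous f → IntervalIntegrable f volume 0 (2 * (2 * π)) :=
    fun f hf => hf.intervalIntegrable _ _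
  rw [intervalIntegral.integral_comp_mul_left (fun u => (b * sin u + c * cos u) ^ 2)
    two_ne_zero, mul_zero]
  simp_rw [hexpand]
  rw [intervalIntegral.integral_add (hint _ (by fun_prop)) ((hint _ (by fun_prop)).add
      (hint _ (by fun_prop))), intervalIntegral.integral_add (hint _ (by fun_prop))
      (hint _ (by fun_prop)), intervalIntegral.integral_const_mul,
    intervalIntegral.integral_const_mul, intervalIntegral.integral_const_mul, integral_sin_sq,
    integral_sin_mul_cos₁, integral_cos_sq]
  have hsin : sin (2 * (2 * π)) = 0 := by rw [sin_two_mul, sin_two_pi, mul_zero, zero_mul]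
  have hcos : cos (2 * (2 * π)) = 1 := by exact_mod_cast cos_nat_mul_two_pi 2
  rw [hsin, hcos, sin_zero, cos_zero]
  ring

open Complex in
theorem exp_mul_I_smul_of_mul_self_eq_one {𝔸 : Type*} [Ring 𝔸] [Algebra ℂ 𝔸]
    [TopologicalSpace 𝔸] [IsTopologicalRing 𝔸] [ContinuousSMul ℂ 𝔸] [T2Space 𝔸] {g : 𝔸}
    (hg : g * g = 1) (z : ℂ) :
    NormedSpace.exp ((z * I) • g) = cos z • (1 : 𝔸) + (sin z * I) • g := by
  have hpow : ∀ n, g ^ (2 * n) = 1 := fun n => by rw [pow_mul, sq, hg, one_pow]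
  rw [NormedSpace.exp_eq_tsum ℂ]
  refine HasSum.tsum_eq (HasSum.even_add_odd ?_ ?_)
  · convert (hasSum_cos' z).smul_const (1 : 𝔸) using 2 with n
    rw [smul_pow, hpow, smul_smul, div_eq_inv_mul]
  · convert ((hasSum_sin' z).mul_right I).smul_const g using 2 with n
    rw [smul_pow, pow_succ g, hpow, one_mul, smul_smul, div_mul_cancel₀ _ I_ne_zero,
      div_eq_inv_mul]

section

open Complex

variable {d : ℕ} {G : Matrix (Fin d) (Fin d) ℂ}

theorem Wrot_zero : Wrot G 0 = 1 := by
  simp [Wrot]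

theorem Wrot_eq_cos_sub_sin (hG : G * G = 1) (θ : ℝ) :
    Wrot G θ = (Real.cos θ : ℂ) • (1 : Matrix (Fin d) (Fin d) ℂ) - (Real.sin θ * I : ℂ) • G := by
  rw [Wrot, show -(I * θ) = (-θ : ℂ) * I by ring, exp_mul_I_smul_of_mul_self_eq_one hG,
    cos_neg, sin_neg, neg_mul, neg_smul, ← sub_eq_add_neg, ofReal_cos, ofReal_sin]

theorem Wrot_add (hG : G * G = 1) (a b : ℝ) : Wrot G (a + b) = Wrot G a * Wrot G b := by
  simp only [Wrot_eq_cos_sub_sin hG, sub_mul, mul_sub, smul_mul_smul_comm, one_mul, mul_one, hG,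
    Real.cos_add, Real.sin_add]
  push_cast
  match_scalars <;> ring_nf
  simp only [I_sq]
  ring

theorem conjTranspose_Wrot (hG : G * G = 1) (hGh : G.IsHermitian) (θ : ℝ) :
    (Wrot G θ)ᴴ = Wrot G (-θ) := by
  simp only [Wrot_eq_cos_sub_sin hG, conjTranspose_sub, conjTranspose_smul, conjTranspose_one,
    hGh.eq, star_mul', Complex.star_def, Complex.conj_ofReal, Complex.conj_I, Real.cos_neg,
    Real.sin_neg]
  push_cast
  module

theorem mul_Wrot_of_commute (hG : G * G = 1) {A : Matrix (Fin d) (Fin d) ℂ}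
    (hA : Commute A G) (θ : ℝ) : A * Wrot G θ = Wrot G θ * A := by
  simp only [Wrot_eq_cos_sub_sin hG, Matrix.mul_sub, Matrix.sub_mul, Matrix.mul_smul,
    Matrix.smul_mul, Matrix.mul_one, Matrix.one_mul, hA.eq]

theorem mul_Wrot_of_anticommute (hG : G * G = 1) {A : Matrix (Fin d) (Fin d) ℂ}
    (hA : A * G = -(G * A)) (θ : ℝ) : A * Wrot G θ = Wrot G (-θ) * A := by
  simp only [Wrot_eq_cos_sub_sin hG, Matrix.mul_sub, Matrix.sub_mul, Matrix.mul_smul,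
    Matrix.smul_mul, Matrix.mul_one, Matrix.one_mul, hA, Real.cos_neg, Real.sin_neg]
  push_cast
  module

theorem Opart1_add_Opart2 (O : Matrix (Fin d) (Fin d) ℂ) : Opart1 G O + Opart2 G O = O := by
  rw [Opart1, Opart2]
  module

theorem commute_Opart1 (hG : G * G = 1) (O : Matrix (Fin d) (Fin d) ℂ) :
    Commute (Opart1 G O) G := by
  have hGG : ∀ X, G * (G * X) = X := fun X => by rw [← Matrix.mul_assoc, hG, Matrix.one_mul]
  simp only [Opart1, Matrix.smul_mul, Matrix.mul_smul, Matrix.add_mul, Matrix.mul_add,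
    Matrix.mul_assoc, hG, hGG, Matrix.mul_one, add_comm, Commute, SemiconjBy]

theorem Opart2_mul_eq_neg_mul (hG : G * G = 1) (O : Matrix (Fin d) (Fin d) ℂ) :
    Opart2 G O * G = -(G * Opart2 G O) := by
  have hGG : ∀ X, G * (G * X) = X := fun X => by rw [← Matrix.mul_assoc, hG, Matrix.one_mul]
  simp only [Opart2, Matrix.smul_mul, Matrix.mul_smul, Matrix.sub_mul, Matrix.mul_sub,
    Matrix.mul_assoc, hG, hGG, Matrix.mul_one, ← smul_neg, neg_sub]

theorem conjTranspose_Wrot_mul_mul_Wrot (hG : G * G = 1) (hGh : G.IsHermitian)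
    (O : Matrix (Fin d) (Fin d) ℂ) (θ : ℝ) :
    (Wrot G θ)ᴴ * O * Wrot G θ = Opart1 G O + Opart2 G O * Wrot G (2 * θ) := by
  calc (Wrot G θ)ᴴ * O * Wrot G θ
      = Wrot G (-θ) * (Opart1 G O + Opart2 G O) * Wrot G θ := by
        rw [conjTranspose_Wrot hG hGh, Opart1_add_Opart2]
    _ = Opart1 G O * (Wrot G (-θ) * Wrot G θ) + Opart2 G O * (Wrot G θ * Wrot G θ) := by
        rw [Matrix.mul_add, Matrix.add_mul,
          ← mul_Wrot_of_commute hG (commute_Opart1 hG O),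
          ← mul_Wrot_of_anticommute hG (Opart2_mul_eq_neg_mul hG O),
          Matrix.mul_assoc, Matrix.mul_assoc]
    _ = Opart1 G O + Opart2 G O * Wrot G (2 * θ) := by
        rw [← Wrot_add hG, ← Wrot_add hG, neg_add_cancel, Wrot_zero, Matrix.mul_one, two_mul]

theorem trace_mul_conj_Wrot (hG : G * G = 1) (hGh : G.IsHermitian)
    (O ρ : Matrix (Fin d) (Fin d) ℂ) (θ : ℝ) :
    (O * (Wrot G θ * ρ * (Wrot G θ)ᴴ)).trace
      = (Opart1 G O * ρ).trace + Real.cos (2 * θ) * (Opart2 G O * ρ).trace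
        - Real.sin (2 * θ) * ((Complex.I • (Opart2 G O * G)) * ρ).trace := by
  rw [Matrix.trace_mul_comm, Matrix.mul_assoc, Matrix.trace_mul_comm, Matrix.mul_assoc,
    ← Matrix.mul_assoc, ← Matrix.mul_assoc, conjTranspose_Wrot_mul_mul_Wrot hG hGh,
    Wrot_eq_cos_sub_sin hG]
  simp only [Matrix.add_mul, Matrix.mul_sub, Matrix.sub_mul, Matrix.mul_smul, Matrix.smul_mul,
    Matrix.mul_one, trace_add, trace_sub, trace_smul, smul_eq_mul]
  ring

open Real in
theorem trace_mul_conj_Wrot_add_pi_div_four_sub (hG : G * G = 1) (hGh : G.IsHermitian)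
    (O ρ : Matrix (Fin d) (Fin d) ℂ) (θ : ℝ) :
    (O * (Wrot G (θ + π / 4) * ρ * (Wrot G (θ + π / 4))ᴴ)).trace
        - (O * (Wrot G (θ - π / 4) * ρ * (Wrot G (θ - π / 4))ᴴ)).trace
      = -2 * (Real.sin (2 * θ) * (Opart2 G O * ρ).trace
          + Real.cos (2 * θ) * ((Complex.I • (Opart2 G O * G)) * ρ).trace) := by
  rw [trace_mul_conj_Wrot hG hGh, trace_mul_conj_Wrot hG hGh, mul_add, mul_sub,
    show 2 * (π / 4) = π / 2 by ring, Real.cos_add_pi_div_two, Real.sin_add_pi_div_two,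
    Real.cos_sub_pi_div_two, Real.sin_sub_pi_div_two]
  push_cast
  ring

end

theorem expectation_shifted_difference_sq_general
    (d : ℕ)
    (G O : Matrix (Fin d) (Fin d) ℂ)
    (hGherm : G.IsHermitian) (hGunit : G * G = 1)
    (ρ : Matrix (Fin d) (Fin d) ℂ) :
    (1 / (2 * Real.pi)) * ∫ θ in (0:ℝ)..(2 * Real.pi),
        (((O * (Wrot G (θ + Real.pi / 4) * ρ * (Wrot G (θ + Real.pi / 4))ᴴ)).trace.re)
          - ((O * (Wrot G (θ - Real.pi / 4) * ρ * (Wrot G (θ - Real.pi / 4))ᴴ)).trace.re)) ^ 2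
      = 2 * ((Opart2 G O * ρ).trace.re) ^ 2
        + 2 * (((Complex.I • (Opart2 G O * G)) * ρ).trace.re) ^ 2 := by
  set b := (Opart2 G O * ρ).trace.re
  set c := ((Complex.I • (Opart2 G O * G)) * ρ).trace.re
  have hdiff : ∀ θ : ℝ,
      (O * (Wrot G (θ + Real.pi / 4) * ρ * (Wrot G (θ + Real.pi / 4))ᴴ)).trace.re
        - (O * (Wrot G (θ - Real.pi / 4) * ρ * (Wrot G (θ - Real.pi / 4))ᴴ)).trace.re
      = -2 * (b * Real.sin (2 * θ) + c * Real.cos (2 * θ)) := fun θ => by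
    rw [← Complex.sub_re, trace_mul_conj_Wrot_add_pi_div_four_sub hGunit hGherm,
      show (-2 : ℂ) = ((-2 : ℝ) : ℂ) by norm_num, Complex.re_ofReal_mul, Complex.add_re,
      Complex.re_ofReal_mul, Complex.re_ofReal_mul]
    ring
  simp_rw [hdiff, mul_pow, intervalIntegral.integral_const_mul,
    integral_sq_mul_sin_two_mul_add_mul_cos_two_mul]
  field_simp

/-- **Lemma 3**: for a Hermitian unitary `G`, a Hermitian observable `O` and a density
matrix `ρ`, with `W_±(θ) = exp(−i(θ ± π/4)G)` and `O₂ = (O − GOG)/2`,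
`E_θ (Tr[O W₊ ρ W₊†] − Tr[O W₋ ρ W₋†])² = 2 Tr[O₂ρ]² + 2 Tr[iO₂Gρ]²`,
with `θ` uniform on `[0, 2π]`. -/
theorem expectation_shifted_difference_sq
    (d : ℕ) (hd : 1 ≤ d)
    (G O : Matrix (Fin d) (Fin d) ℂ)
    (hGherm : G.IsHermitian) (hGunit : G * G = 1) (hO : O.IsHermitian)
    (ρ : Matrix (Fin d) (Fin d) ℂ) (hρ : ρ.PosSemidef) (hρtr : ρ.trace = 1) :
    (1 / (2 * Real.pi)) * ∫ θ in (0:ℝ)..(2 * Real.pi),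
        (((O * (Wrot G (θ + Real.pi / 4) * ρ * (Wrot G (θ + Real.pi / 4))ᴴ)).trace.re)
          - ((O * (Wrot G (θ - Real.pi / 4) * ρ * (Wrot G (θ - Real.pi / 4))ᴴ)).trace.re)) ^ 2
      = 2 * ((Opart2 G O * ρ).trace.re) ^ 2
        + 2 * (((Complex.I • (Opart2 G O * G)) * ρ).trace.re) ^ 2 :=
  expectation_shifted_difference_sq_general d G O hGherm hGunit ρ
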